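/- Let a ≥ 3 be an odd integer and p ∈ (0,1) with q = 1 − p. Let z_1,…,z_m ∈ {1,…,a−1} be pairwise distinct sites and π_1,…,π_m > 0 strictly positive weights. Suppose there exists a constant C ∈ ℝ such that Σ_{i=1}^m π_i·u(z_i;γ) = C·Σ_{i=1}^m π_i·s(z_i;γ) for every γ ∈ (0,1). Then: (1) the site set is closed under reflection, i.e., a − z_i ∈ {z_1,…,z_m} for every i; (2) C = C* = (q/p)^{a/2}/(1 + (q/p)^{a/2}); and (3) the weights satisfy π_i·(p/q)^{(a−z_i)/2} = π_{j(i)}·(p/q)^{z_i/2} for each i, where z_{j(i)} = a − z_i. In particular, if the site set is not symmetric under z ↦ a − z, no strictly positive weights can make the coupling constant independent of γ. -/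

import Mathlib

/-!
Expanding both sides in the spectral basis, γ-independence of the coupling constant says that
`∑_ν c_ν f_ν(γ) = 0` on `(0,1)`. Since `a` is odd the eigenvalues `λ_ν` are nonzero, pairwise
distinct and of modulus `< 1`, so the functions `t ↦ λ_ν t / (1 - λ_ν t)` are linearly
independent and every `c_ν` vanishes. After the common factor `(2/a) sin(πν/a)` is cancelled,
`c_ν` is the discrete sine transform of the distribution putting mass `(1-C) π_i (q/p)^{z_i/2}` at
`z_i` and `-C π_i (p/q)^{(a-z_i)/2}` at `a - z_i`; by orthogonality of the sine basis it is zero.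
A site without mirror image would force both `C = 1` and `C = 0`. For a mirror pair the two
balance equations multiply to `C² = (1-C)² (q/p)^a`, and positivity fixes the sign, giving `C*`
and the relation between the weights.
-/

/-- Eigenvalue `λ_ν = 2√(p(1−p))·cos(πν/a)`. -/
noncomputable def lam (a : ℕ) (p : ℝ) (ν : ℕ) : ℝ :=
  2 * Real.sqrt (p * (1 - p)) * Real.cos (Real.pi * ν / a)

/-- Spectral transfer function `f_ν(γ) = λ_ν(1−γ)/(1 − λ_ν(1−γ))`. -/
noncomputable def fer (a : ℕ) (p : ℝ) (ν : ℕ) (γ : ℝ) : ℝ :=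
  lam a p ν * (1 - γ) / (1 - lam a p ν * (1 - γ))

/-- Spectral coefficient `A_ν(w) = (2/a)·(q/p)^{w/2}·sin(πνw/a)·sin(πν/a)`. -/
noncomputable def Acoef (a : ℕ) (p : ℝ) (ν w : ℕ) : ℝ :=
  (2 / a) * ((1 - p) / p) ^ ((w : ℝ) / 2) *
    Real.sin (Real.pi * ν * w / a) * Real.sin (Real.pi * ν / a)

/-- Spectral coefficient `B_ν(w) = (2/a)·(p/q)^{(a−w)/2}·sin(πν(a−w)/a)·sin(πν/a)`. -/
noncomputable def Bcoef (a : ℕ) (p : ℝ) (ν w : ℕ) : ℝ :=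
  (2 / a) * (p / (1 - p)) ^ (((a : ℝ) - w) / 2) *
    Real.sin (Real.pi * ν * ((a : ℝ) - w) / a) * Real.sin (Real.pi * ν / a)

/-- Discounted first-cycle ruin probability `u(z;γ) = Σ_ν A_ν(z)·f_ν(γ)`. -/
noncomputable def usum (a : ℕ) (p : ℝ) (z : ℕ) (γ : ℝ) : ℝ :=
  ∑ ν ∈ Finset.Icc 1 (a - 1), Acoef a p ν z * fer a p ν γ

/-- Discounted first-cycle absorption probability
`s(z;γ) = Σ_ν (A_ν(z)+B_ν(z))·f_ν(γ)`. -/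
noncomputable def ssum (a : ℕ) (p : ℝ) (z : ℕ) (γ : ℝ) : ℝ :=
  ∑ ν ∈ Finset.Icc 1 (a - 1), (Acoef a p ν z + Bcoef a p ν z) * fer a p ν γ

open Finset

section

open Real

theorem two_mul_sin_half_mul_sum_range_cos (θ : ℝ) (n : ℕ) :
    2 * sin (θ / 2) * ∑ ν ∈ range n, cos (ν * θ) = sin ((n - 1 / 2) * θ) + sin (θ / 2) := by
  induction n with
  | zero =>
    rw [sum_range_zero, Nat.cast_zero, zero_sub, neg_mul, sin_neg]
    ring_nf
  | succ n ih =>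
    rw [sum_range_succ, mul_add, ih, two_mul_sin_mul_cos,
      show θ / 2 - n * θ = -((n - 1 / 2) * θ) by ring, sin_neg]
    push_cast
    ring_nf

theorem sum_range_cos_pi_mul_div {a : ℕ} (ha : 0 < a) {k : ℤ} (hk : ¬ 2 * (a : ℤ) ∣ k) :
    ∑ ν ∈ range a, cos (π * k * ν / a) = (1 - (-1) ^ k) / 2 := by
  have haR : (a : ℝ) ≠ 0 := by positivity
  set θ := π * k / a with hθ
  have hsin : sin (θ / 2) ≠ 0 := by
    rw [Ne, sin_eq_zero_iff]
    rintro ⟨n, hn⟩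
    refine hk ⟨n, ?_⟩
    have : (k : ℝ) = 2 * a * n := by
      rw [hθ] at hn
      field_simp at hn
      nlinarith [pi_pos]
    exact_mod_cast this
  have htel := two_mul_sin_half_mul_sum_range_cos θ a
  rw [show ((a : ℝ) - 1 / 2) * θ = k * π - θ / 2 by rw [hθ]; field_simp,
    sin_int_mul_pi_sub] at htel
  have hterm : ∀ ν : ℕ, cos (π * k * ν / a) = cos (ν * θ) := fun ν => by rw [hθ]; ring_nf
  simp only [hterm]
  apply mul_left_cancel₀ (mul_ne_zero two_ne_zero hsin)
  rw [htel]
  ring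

theorem sum_sin_mul_sin {a z w : ℕ} (hz : z ∈ Icc 1 (a - 1)) (hw : w ∈ Icc 1 (a - 1)) :
    ∑ ν ∈ Icc 1 (a - 1), sin (π * ν * z / a) * sin (π * ν * w / a) =
      if z = w then (a : ℝ) / 2 else 0 := by
  rw [mem_Icc] at hz hw
  have ha : 0 < a := by omega
  have hndvd : ∀ k : ℤ, k ≠ 0 → |k| < 2 * a → ¬ 2 * (a : ℤ) ∣ k :=
    fun k hk hlt hdvd => hk (Int.eq_zero_of_abs_lt_dvd hdvd hlt)
  have hrange : ∑ ν ∈ Icc 1 (a - 1), sin (π * ν * z / a) * sin (π * ν * w / a) =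
      ∑ ν ∈ range a, sin (π * ν * z / a) * sin (π * ν * w / a) := by
    refine sum_subset (fun ν hν => ?_) (fun ν hν hν' => ?_)
    · rw [mem_Icc] at hν; rw [mem_range]; omega
    · rw [mem_range] at hν; rw [mem_Icc] at hν'
      obtain rfl : ν = 0 := by omega
      simp
  have hprod : ∀ ν : ℕ, sin (π * ν * z / a) * sin (π * ν * w / a) =
      (cos (π * ((z - w : ℤ) : ℝ) * ν / a) - cos (π * ((z + w : ℤ) : ℝ) * ν / a)) / 2 := by
    intro ν
    rw [eq_div_iff two_ne_zero, mul_comm, ← mul_assoc, two_mul_sin_mul_sin]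
    push_cast
    ring_nf
  rw [hrange]
  simp only [hprod]
  rw [← sum_div, sum_sub_distrib, sum_range_cos_pi_mul_div ha
    (hndvd ((z : ℤ) + w) (by omega) (by rw [abs_lt]; omega))]
  split_ifs with hzw
  · subst hzw
    simp [Even.neg_one_zpow (⟨z, rfl⟩ : Even ((z : ℤ) + z))]
  · rw [sum_range_cos_pi_mul_div ha (hndvd ((z : ℤ) - w) (by omega) (by rw [abs_lt]; omega)),
      show ((z : ℤ) + w) = (z - w) + 2 * w by ring, zpow_add₀ (by norm_num),
      Even.neg_one_zpow (even_two_mul (w : ℤ))]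
    ring

theorem sum_filter_eq_sum_filter_of_forall_sum_mul_sin_eq {ι : Type*} [Fintype ι] {a : ℕ}
    {y y' : ι → ℕ} (hy : ∀ i, y i ∈ Icc 1 (a - 1)) (hy' : ∀ i, y' i ∈ Icc 1 (a - 1))
    {c c' : ι → ℝ}
    (h : ∀ ν ∈ Icc 1 (a - 1),
      ∑ i, (c i * sin (π * ν * y i / a) - c' i * sin (π * ν * y' i / a)) = 0)
    {k : ℕ} (hk : k ∈ Icc 1 (a - 1)) : ∑ i with y i = k, c i = ∑ i with y' i = k, c' i := by
  have ha : (0 : ℝ) < a := by rw [mem_Icc] at hk; exact_mod_cast (by omega : 0 < a)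
  have hsum : (a / 2 : ℝ) * (∑ i with y i = k, c i - ∑ i with y' i = k, c' i) = 0 :=
    calc (a / 2 : ℝ) * (∑ i with y i = k, c i - ∑ i with y' i = k, c' i)
        = ∑ i, (c i * ∑ ν ∈ Icc 1 (a - 1), sin (π * ν * y i / a) * sin (π * ν * k / a) -
            c' i * ∑ ν ∈ Icc 1 (a - 1), sin (π * ν * y' i / a) * sin (π * ν * k / a)) := by
          simp only [sum_sin_mul_sin (hy _) hk, sum_sin_mul_sin (hy' _) hk, sum_filter,
            mul_sub, mul_sum, sum_sub_distrib]
          congr 1 <;> exact sum_congr rfl fun i _ => by split_ifs <;> ring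
      _ = ∑ ν ∈ Icc 1 (a - 1),
            (∑ i, (c i * sin (π * ν * y i / a) - c' i * sin (π * ν * y' i / a))) *
              sin (π * ν * k / a) := by
          simp only [mul_sum, sum_mul, ← sum_sub_distrib]
          rw [sum_comm]
          exact sum_congr rfl fun ν _ => sum_congr rfl fun i _ => by ring
      _ = 0 := sum_eq_zero fun ν hν => by rw [h ν hν, zero_mul]
  exact sub_eq_zero.mp ((mul_eq_zero.mp hsum).resolve_left (by positivity))

theorem eq_zero_of_forall_sum_mul_div_one_sub_mul_eq_zero {ι : Type*} [DecidableEq ι]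
    {s : Finset ι} {L c : ι → ℝ} (hL₀ : ∀ ν ∈ s, L ν ≠ 0) (hL₁ : ∀ ν ∈ s, |L ν| < 1)
    (hinj : Set.InjOn L s)
    (h : ∀ t ∈ Set.Ioo (0 : ℝ) 1, ∑ ν ∈ s, c ν * (L ν * t / (1 - L ν * t)) = 0) :
    ∀ ν ∈ s, c ν = 0 := by
  -- `P(t)` is the sum in `h` times `∏ η, (1 - L η * t)`; at `t = (L μ)⁻¹` only the `μ`-term
  -- survives.
  open Polynomial in
  set P : ℝ[X] := ∑ ν ∈ s, Polynomial.C (c ν * L ν) * X *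
    ∏ η ∈ s.erase ν, (1 - Polynomial.C (L η) * X)
  have hP : ∀ t, P.eval t = ∑ ν ∈ s, c ν * L ν * t * ∏ η ∈ s.erase ν, (1 - L η * t) := by
    intro t
    simp [P, eval_finsetSum, eval_prod]
  have hroot : ∀ t ∈ Set.Ioo (0 : ℝ) 1, P.IsRoot t := by
    intro t ht
    have hden : ∀ ν ∈ s, 1 - L ν * t ≠ 0 := fun ν hν => by
      have : |L ν * t| < 1 := by
        rw [abs_mul, abs_of_pos ht.1]
        nlinarith [hL₁ ν hν, abs_nonneg (L ν), ht.2]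
      linarith [le_abs_self (L ν * t)]
    rw [Polynomial.IsRoot, hP, ← zero_mul (∏ η ∈ s, (1 - L η * t)), ← h t ht, sum_mul]
    refine sum_congr rfl fun ν hν => ?_
    rw [← mul_prod_erase s _ hν]
    field_simp [hden ν hν]
  have hP0 : P = 0 :=
    Polynomial.eq_zero_of_infinite_isRoot P ((Set.Ioo_infinite zero_lt_one).mono hroot)
  intro μ hμ
  have hLμ := hL₀ μ hμ
  have hprod : ∏ η ∈ s.erase μ, (1 - L η * (L μ)⁻¹) ≠ 0 := by
    refine prod_ne_zero_iff.mpr fun η hη h0 => (mem_erase.mp hη).1 (hinj (mem_erase.mp hη).2 hμ ?_)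
    field_simp at h0
    linarith
  have hsingle := hP (L μ)⁻¹
  rw [hP0, Polynomial.eval_zero,
    sum_eq_single μ (fun ν _ hνμ => ?_) (fun h => absurd hμ h)] at hsingle
  · rw [mul_inv_cancel_right₀ hLμ] at hsingle
    exact (mul_eq_zero.mp hsingle.symm).resolve_right hprod
  · refine mul_eq_zero_of_right _ (prod_eq_zero (mem_erase.mpr ⟨Ne.symm hνμ, hμ⟩) ?_)
    rw [mul_inv_cancel₀ hLμ, sub_self]

theorem pi_mul_div_mem_Ioo {a ν : ℕ} (hν : ν ∈ Icc 1 (a - 1)) : π * ν / a ∈ Set.Ioo 0 π := by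
  rw [mem_Icc] at hν
  have hν₀ : (0 : ℝ) < ν := by exact_mod_cast (by omega : 0 < ν)
  have hνa : (ν : ℝ) < a := by exact_mod_cast (by omega : ν < a)
  refine ⟨div_pos (mul_pos pi_pos hν₀) (hν₀.trans hνa), ?_⟩
  rw [div_lt_iff₀ (hν₀.trans hνa)]
  exact mul_lt_mul_of_pos_left hνa pi_pos

theorem abs_lam_lt_one {a ν : ℕ} (p : ℝ) (hν : ν ∈ Icc 1 (a - 1)) : |lam a p ν| < 1 := by
  have hsqrt : √(p * (1 - p)) ≤ 1 / 2 :=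
    (sqrt_le_left (by norm_num)).mpr (by nlinarith [sq_nonneg (2 * p - 1)])
  have hcos : |cos (π * ν / a)| < 1 := by
    rw [← sq_lt_one_iff_abs_lt_one, cos_sq']
    linarith [pow_pos (sin_pos_of_mem_Ioo (pi_mul_div_mem_Ioo hν)) 2]
  rw [lam, abs_mul, abs_of_nonneg (by positivity)]
  nlinarith [abs_nonneg (cos (π * ν / a))]

theorem lam_ne_zero {a : ℕ} (ha : Odd a) {p : ℝ} (hp : p ∈ Set.Ioo (0 : ℝ) 1) {ν : ℕ}
    (hν : ν ∈ Icc 1 (a - 1)) : lam a p ν ≠ 0 := by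
  have hsqrt : √(p * (1 - p)) ≠ 0 := (sqrt_pos.mpr (mul_pos hp.1 (by linarith [hp.2]))).ne'
  refine mul_ne_zero (mul_ne_zero two_ne_zero hsqrt) fun hcos => ?_
  obtain ⟨k, hk⟩ := cos_eq_zero_iff.mp hcos
  have haR : (a : ℝ) ≠ 0 := by rw [mem_Icc] at hν; exact_mod_cast (by omega : a ≠ 0)
  have h2ν : ((2 * ν : ℕ) : ℤ) = (2 * k + 1) * a := by
    have : (2 * ν : ℝ) = (2 * k + 1) * a := by
      field_simp at hk
      nlinarith [pi_pos]
    exact_mod_cast this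
  have hodd : Odd ((2 * k + 1) * (a : ℤ)) := (odd_two_mul_add_one k).mul (by exact_mod_cast ha)
  rw [← h2ν] at hodd
  exact Int.not_even_iff_odd.mpr hodd ⟨ν, by push_cast; ring⟩

theorem lam_injOn (a : ℕ) {p : ℝ} (hp : p ∈ Set.Ioo (0 : ℝ) 1) :
    Set.InjOn (lam a p) (Icc 1 (a - 1) : Set ℕ) := by
  intro ν hν η hη h
  have hsqrt : 2 * √(p * (1 - p)) ≠ 0 :=
    mul_ne_zero two_ne_zero (sqrt_pos.mpr (mul_pos hp.1 (by linarith [hp.2]))).ne'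
  have hν' := pi_mul_div_mem_Ioo (mem_coe.mp hν)
  have hη' := pi_mul_div_mem_Ioo (mem_coe.mp hη)
  have hcos := injOn_cos (Set.Ioo_subset_Icc_self hν') (Set.Ioo_subset_Icc_self hη')
    (mul_left_cancel₀ hsqrt h)
  have ha : (a : ℝ) ≠ 0 := by
    have := mem_Icc.mp (mem_coe.mp hν); exact_mod_cast (by omega : a ≠ 0)
  field_simp at hcos
  exact_mod_cast hcos

theorem eq_zero_of_forall_sum_mul_fer_eq_zero {a : ℕ} (ha : Odd a) {p : ℝ}
    (hp : p ∈ Set.Ioo (0 : ℝ) 1) {c : ℕ → ℝ}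
    (h : ∀ γ ∈ Set.Ioo (0 : ℝ) 1, ∑ ν ∈ Icc 1 (a - 1), c ν * fer a p ν γ = 0) :
    ∀ ν ∈ Icc 1 (a - 1), c ν = 0 := by
  refine eq_zero_of_forall_sum_mul_div_one_sub_mul_eq_zero (fun ν hν => lam_ne_zero ha hp hν)
    (fun ν hν => abs_lam_lt_one p hν) (lam_injOn a hp) fun t ht => ?_
  simpa [fer] using h (1 - t) ⟨by linarith [ht.2], by linarith [ht.1]⟩

theorem eq_div_one_add_and_mul_inv_eq_of_balance {C x y u v : ℝ} (hx : 0 < x) (hy : 0 < y)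
    (hu : 0 < u) (hv : 0 < v) (h₁ : (1 - C) * x * u = C * y * u⁻¹)
    (h₂ : (1 - C) * y * v = C * x * v⁻¹) :
    C = u * v / (1 + u * v) ∧ x * v⁻¹ = y * u⁻¹ := by
  have e₁ : (1 - C) * x * u ^ 2 = C * y := by
    field_simp at h₁; linear_combination h₁
  have e₂ : (1 - C) * y * v ^ 2 = C * x := by
    field_simp at h₂; linear_combination h₂
  have hC : C ≠ 1 := by
    rintro rfl
    linarith [e₁]
  have hD : 1 - C ≠ 0 := sub_ne_zero.mpr (Ne.symm hC)
  have hprod : (C - (1 - C) * (u * v)) * (C + (1 - C) * (u * v)) * (x * y) = 0 := by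
    linear_combination (-C * x) * e₁ - (1 - C) * x * u ^ 2 * e₂
  have hCuv : C = (1 - C) * (u * v) := by
    rcases mul_eq_zero.mp hprod with h | h
    · rcases mul_eq_zero.mp h with h | h
      · linarith
      · have : (1 - C) * (x * u ^ 2 + u * v * y) = 0 := by linear_combination e₁ + y * h
        rcases mul_eq_zero.mp this with h' | h'
        · exact absurd h' hD
        · nlinarith [mul_pos hx (pow_pos hu 2), mul_pos (mul_pos hu hv) hy]
    · nlinarith [mul_pos hx hy]
  refine ⟨by rw [eq_div_iff (by positivity)]; linear_combination hCuv, ?_⟩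
  have hxu : x * u = y * v := by
    have : (1 - C) * u * (x * u - y * v) = 0 := by linear_combination e₁ + y * hCuv
    rcases mul_eq_zero.mp this with h | h
    · exact absurd h (mul_ne_zero hD hu.ne')
    · linarith
  field_simp
  linear_combination hxu

theorem Function.Injective.sum_filter_apply_eq {ι β M : Type*} [Fintype ι] [DecidableEq β]
    [AddCommMonoid M] {z : ι → β} (hinj : Function.Injective z) (f : ι → M) (i : ι) :
    ∑ j with z j = z i, f j = f i := by
  rw [sum_filter, Fintype.sum_eq_single i fun j hji => if_neg (hinj.ne hji), if_pos rfl]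

theorem eq_sum_reflect_and_sum_reflect_eq {ι : Type*} [Fintype ι] {a : ℕ} {z : ι → ℕ}
    (hz : ∀ i, z i ∈ Icc 1 (a - 1)) (hinj : Function.Injective z) {X Y : ι → ℝ}
    (hbal : ∀ k ∈ Icc 1 (a - 1), ∑ i with z i = k, X i = ∑ i with z i = a - k, Y i) (i : ι) :
    X i = ∑ j with z j = a - z i, Y j ∧ ∑ j with z j = a - z i, X j = Y i := by
  have hzi := mem_Icc.mp (hz i)
  constructor
  · rw [← hinj.sum_filter_apply_eq X, hbal (z i) (hz i)]
  · rw [hbal (a - z i) (mem_Icc.mpr (by omega)), Nat.sub_sub_self (by omega),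
      hinj.sum_filter_apply_eq]

section Coupling

variable {a : ℕ} {p : ℝ} {ι : Type*} [Fintype ι] {z : ι → ℕ} (ϖ : ι → ℝ) (C : ℝ)

theorem sum_mul_coeff_eq_zero_of_coupling (ha : Odd a) (hp : p ∈ Set.Ioo (0 : ℝ) 1)
    (hinv : ∀ γ ∈ Set.Ioo (0 : ℝ) 1,
      ∑ i, ϖ i * usum a p (z i) γ = C * ∑ i, ϖ i * ssum a p (z i) γ) :
    ∀ ν ∈ Icc 1 (a - 1),
      ∑ i, ϖ i * (Acoef a p ν (z i) - C * (Acoef a p ν (z i) + Bcoef a p ν (z i))) = 0 := by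
  refine eq_zero_of_forall_sum_mul_fer_eq_zero ha hp fun γ hγ => ?_
  rw [← sub_eq_zero.mpr (hinv γ hγ)]
  simp only [usum, ssum, mul_sum, sum_mul, ← sum_sub_distrib]
  rw [sum_comm]
  exact sum_congr rfl fun i _ => sum_congr rfl fun ν _ => by ring

theorem sum_mul_sin_sub_mul_sin_reflect_eq_zero_of_coupling (ha : Odd a)
    (hp : p ∈ Set.Ioo (0 : ℝ) 1)
    (hinv : ∀ γ ∈ Set.Ioo (0 : ℝ) 1,
      ∑ i, ϖ i * usum a p (z i) γ = C * ∑ i, ϖ i * ssum a p (z i) γ) :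
    ∀ ν ∈ Icc 1 (a - 1),
      ∑ i, ((1 - C) * ϖ i * ((1 - p) / p) ^ ((z i : ℝ) / 2) * sin (π * ν * z i / a) -
        C * ϖ i * (p / (1 - p)) ^ (((a : ℝ) - z i) / 2) * sin (π * ν * ((a : ℝ) - z i) / a)) =
        0 := by
  intro ν hν
  have hfactor : ∑ i, ϖ i * (Acoef a p ν (z i) - C * (Acoef a p ν (z i) + Bcoef a p ν (z i))) =
      2 / a * sin (π * ν / a) *
        ∑ i, ((1 - C) * ϖ i * ((1 - p) / p) ^ ((z i : ℝ) / 2) * sin (π * ν * z i / a) -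
          C * ϖ i * (p / (1 - p)) ^ (((a : ℝ) - z i) / 2) * sin (π * ν * ((a : ℝ) - z i) / a)) := by
    rw [mul_sum]
    exact sum_congr rfl fun i _ => by simp only [Acoef, Bcoef]; ring
  have hsin := (sin_pos_of_mem_Ioo (pi_mul_div_mem_Ioo hν)).ne'
  have ha₀ : (a : ℝ) ≠ 0 := by rw [mem_Icc] at hν; exact_mod_cast (by omega : a ≠ 0)
  rw [sum_mul_coeff_eq_zero_of_coupling ϖ C ha hp hinv ν hν] at hfactor
  exact (mul_eq_zero.mp hfactor.symm).resolve_left (by positivity)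

theorem sum_filter_eq_sum_filter_reflect_of_coupling (ha : Odd a) (hp : p ∈ Set.Ioo (0 : ℝ) 1)
    (hz : ∀ i, z i ∈ Icc 1 (a - 1))
    (hinv : ∀ γ ∈ Set.Ioo (0 : ℝ) 1,
      ∑ i, ϖ i * usum a p (z i) γ = C * ∑ i, ϖ i * ssum a p (z i) γ)
    {k : ℕ} (hk : k ∈ Icc 1 (a - 1)) :
    ∑ i with z i = k, (1 - C) * ϖ i * ((1 - p) / p) ^ ((z i : ℝ) / 2) =
      ∑ i with z i = a - k, C * ϖ i * (p / (1 - p)) ^ (((a : ℝ) - z i) / 2) := by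
  have hreflect : ∀ i, a - z i ∈ Icc 1 (a - 1) := fun i => by
    have := mem_Icc.mp (hz i); exact mem_Icc.mpr (by omega)
  have hcast : ∀ i, ((a - z i : ℕ) : ℝ) = a - z i := fun i =>
    Nat.cast_sub (by have := mem_Icc.mp (hz i); omega)
  have hiff : ∀ i, a - z i = k ↔ z i = a - k := fun i => by
    have := mem_Icc.mp (hz i); have := mem_Icc.mp hk; omega
  rw [sum_filter_eq_sum_filter_of_forall_sum_mul_sin_eq hz hreflect (fun ν hν => by
    simpa only [hcast] using
      sum_mul_sin_sub_mul_sin_reflect_eq_zero_of_coupling ϖ C ha hp hinv ν hν) hk]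
  simp only [hiff]

theorem div_one_sub_rpow_eq_inv (hp : p ∈ Set.Ioo (0 : ℝ) 1) (x : ℝ) :
    (p / (1 - p)) ^ x = (((1 - p) / p) ^ x)⁻¹ := by
  rw [← inv_rpow (div_pos (by linarith [hp.2]) hp.1).le, inv_div]

variable {ϖ C}

theorem exists_reflect_of_coupling (ha : Odd a) (hp : p ∈ Set.Ioo (0 : ℝ) 1)
    (hz : ∀ i, z i ∈ Icc 1 (a - 1)) (hinj : Function.Injective z) (hϖ : ∀ i, 0 < ϖ i)
    (hinv : ∀ γ ∈ Set.Ioo (0 : ℝ) 1,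
      ∑ i, ϖ i * usum a p (z i) γ = C * ∑ i, ϖ i * ssum a p (z i) γ) (i : ι) :
    ∃ j, z j = a - z i := by
  by_contra! hnone
  obtain ⟨hX, hY⟩ := eq_sum_reflect_and_sum_reflect_eq hz hinj
    (fun k hk => sum_filter_eq_sum_filter_reflect_of_coupling ϖ C ha hp hz hinv hk) i
  have hρ : 0 < (1 - p) / p := div_pos (by linarith [hp.2]) hp.1
  simp only [hnone, filter_false, sum_empty, mul_eq_zero, zero_eq_mul, (hϖ i).ne',
    (rpow_pos_of_pos hρ _).ne', div_one_sub_rpow_eq_inv hp, inv_eq_zero, or_false] at hX hY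
  linarith

theorem coupling_eq_and_weight_balance_of_coupling (ha : Odd a) (hp : p ∈ Set.Ioo (0 : ℝ) 1)
    (hz : ∀ i, z i ∈ Icc 1 (a - 1)) (hinj : Function.Injective z) (hϖ : ∀ i, 0 < ϖ i)
    (hinv : ∀ γ ∈ Set.Ioo (0 : ℝ) 1,
      ∑ i, ϖ i * usum a p (z i) γ = C * ∑ i, ϖ i * ssum a p (z i) γ)
    {i j : ι} (hj : z j = a - z i) :
    C = ((1 - p) / p) ^ ((a : ℝ) / 2) / (1 + ((1 - p) / p) ^ ((a : ℝ) / 2)) ∧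
      ϖ i * (p / (1 - p)) ^ (((a : ℝ) - z i) / 2) = ϖ j * (p / (1 - p)) ^ ((z i : ℝ) / 2) := by
  have hρ : 0 < (1 - p) / p := div_pos (by linarith [hp.2]) hp.1
  have hzj : (z j : ℝ) = a - z i := by
    rw [hj, Nat.cast_sub (by have := mem_Icc.mp (hz i); omega)]
  obtain ⟨h₁, h₂⟩ := eq_sum_reflect_and_sum_reflect_eq hz hinj
    (fun k hk => sum_filter_eq_sum_filter_reflect_of_coupling ϖ C ha hp hz hinv hk) i
  rw [← hj, hinj.sum_filter_apply_eq] at h₁ h₂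
  simp only [hzj, sub_sub_cancel, div_one_sub_rpow_eq_inv hp] at h₁ h₂
  obtain ⟨hC, hweights⟩ := eq_div_one_add_and_mul_inv_eq_of_balance (hϖ i) (hϖ j)
    (rpow_pos_of_pos hρ _) (rpow_pos_of_pos hρ _) h₁ h₂
  rw [← rpow_add hρ, ← add_div, add_sub_cancel] at hC
  rw [div_one_sub_rpow_eq_inv hp, div_one_sub_rpow_eq_inv hp]
  exact ⟨hC, hweights⟩

end Coupling

end

theorem stmt_19_general (a : ℕ) (hOdd : Odd a) (p : ℝ)
    (hp : p ∈ Set.Ioo (0 : ℝ) 1)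
    (m : ℕ) (hm : 0 < m) (z : Fin m → ℕ)
    (hzmem : ∀ i, z i ∈ Finset.Icc 1 (a - 1))
    (hzinj : Function.Injective z)
    (π : Fin m → ℝ) (hπ : ∀ i, 0 < π i) (C : ℝ)
    (hinv : ∀ γ ∈ Set.Ioo (0 : ℝ) 1,
      ∑ i, π i * usum a p (z i) γ = C * ∑ i, π i * ssum a p (z i) γ) :
    (∀ i, ∃ j, z j = a - z i) ∧
    C = ((1 - p) / p) ^ ((a : ℝ) / 2) / (1 + ((1 - p) / p) ^ ((a : ℝ) / 2)) ∧
    (∀ i j, z j = a - z i →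
      π i * (p / (1 - p)) ^ (((a : ℝ) - z i) / 2) =
        π j * (p / (1 - p)) ^ ((z i : ℝ) / 2)) := by
  have hpartner := exists_reflect_of_coupling hOdd hp hzmem hzinj hπ hinv
  obtain ⟨j, hj⟩ := hpartner ⟨0, hm⟩
  exact ⟨hpartner,
    (coupling_eq_and_weight_balance_of_coupling hOdd hp hzmem hzinj hπ hinv hj).1,
    fun i j hj => (coupling_eq_and_weight_balance_of_coupling hOdd hp hzmem hzinj hπ hinv hj).2⟩

/-- necessity of the geometric symmetry (odd `a`). If strictly
positive weights on distinct sites make the coupling constant independent of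
`γ`, then (1) the site set is closed under `z ↦ a − z`, (2) the constant is
`C* = (q/p)^{a/2}/(1+(q/p)^{a/2})`, and (3) the weights satisfy the critical
balance `π_i·(p/q)^{(a−z_i)/2} = π_{j(i)}·(p/q)^{z_i/2}` where `z_{j(i)} = a − z_i`. -/
theorem stmt_19 (a : ℕ) (ha : 3 ≤ a) (hOdd : Odd a) (p : ℝ)
    (hp : p ∈ Set.Ioo (0 : ℝ) 1)
    (m : ℕ) (hm : 0 < m) (z : Fin m → ℕ)
    (hzmem : ∀ i, z i ∈ Finset.Icc 1 (a - 1))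
    (hzinj : Function.Injective z)
    (π : Fin m → ℝ) (hπ : ∀ i, 0 < π i) (C : ℝ)
    (hinv : ∀ γ ∈ Set.Ioo (0 : ℝ) 1,
      ∑ i, π i * usum a p (z i) γ = C * ∑ i, π i * ssum a p (z i) γ) :
    (∀ i, ∃ j, z j = a - z i) ∧
    C = ((1 - p) / p) ^ ((a : ℝ) / 2) / (1 + ((1 - p) / p) ^ ((a : ℝ) / 2)) ∧
    (∀ i j, z j = a - z i →
      π i * (p / (1 - p)) ^ (((a : ℝ) - z i) / 2) =
        π j * (p / (1 - p)) ^ ((z i : ℝ) / 2)) :=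
  stmt_19_general a hOdd p hp m hm z hzmem hzinj π hπ C hinv
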